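/- arXiv:2004.14780 — 4 statements merged into one kernel-verified Lean document; each statement's English description precedes it below -/
import Mathlib

section
/- Let (S,E,I,R) be a C¹ solution on [0,∞) of the modified SEIR system S' = -βᵢIS - βₑES, E' = βᵢIS + βₑES - aE, I' = aE - (γ+μ)I, R' = γI, with βᵢ, βₑ, a, γ, μ nonnegative continuous functions and nonnegative initial data. Then S(t), E(t), I(t), R(t) are nonnegative for all t ≥ 0. -/
/-! A compartment that reaches zero while the others are nonnegative has nonnegative rate
(`S' = 0`, `E' = βᵢ I S ≥ 0`, `I' = a E ≥ 0`). On a bounded interval `[0, T]` the solution and the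
coefficients are bounded, which makes this quantitative: if one compartment equals `-δ` while the
others are `≥ -δ`, its rate is `≥ -L δ`. Hence every compartment stays above `-ε e^{(L+1) t}`: at a
first touching point the gap would have right derivative `≥ ε e^{(L+1) t} > 0`. Letting `ε → 0`
gives `S, E, I ≥ 0`, and then `R` is nondecreasing because `R' = γ I ≥ 0`. -/

open Set Filter Topology

theorem HasDerivWithinAt.eventually_gt_of_deriv_pos {f : ℝ → ℝ} {f' x : ℝ}
    (hf : HasDerivWithinAt f f' (Ici x) x) (hf' : 0 < f') : ∀ᶠ z in 𝓝[>] x, f x < f z := by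
  have hslope := (hasDerivWithinAt_iff_tendsto_slope' (lt_irrefl x)).1 hf.Ioi_of_Ici
  filter_upwards [hslope.eventually (lt_mem_nhds hf'), self_mem_nhdsWithin] with z hz hxz
  exact (slope_pos_iff_of_le (le_of_lt hxz)).1 hz

section QuasiPositive

variable {ι : Type*} [Finite ι] {x x' : ι → ℝ → ℝ} {a b L : ℝ}

theorem neg_mul_exp_le_of_quasiPositive (hx : ∀ i, ContinuousOn (x i) (Icc a b))
    (hx' : ∀ i, ∀ t ∈ Ico a b, HasDerivWithinAt (x i) (x' i t) (Ici t) t)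
    (ha : ∀ i, 0 ≤ x i a)
    (hqp : ∀ t ∈ Ico a b, ∀ δ > 0, (∀ j, -δ ≤ x j t) → ∀ i, x i t = -δ → -(L * δ) ≤ x' i t)
    {ε : ℝ} (hε : 0 < ε) {t : ℝ} (ht : t ∈ Icc a b) (i : ι) :
    -(ε * Real.exp ((L + 1) * t)) ≤ x i t := by
  set B : ℝ → ℝ := fun t ↦ ε * Real.exp ((L + 1) * t)
  have hB : ∀ t, HasDerivAt B ((L + 1) * B t) t := fun t ↦ by
    simpa [B, mul_comm, mul_left_comm] using
      ((hasDerivAt_id t).const_mul (L + 1)).exp.const_mul ε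
  have hB_pos : ∀ t, 0 < B t := fun t ↦ by positivity
  have hclosed : IsClosed ({t | ∀ i, -B t ≤ x i t} ∩ Icc a b) := by
    have : {t | ∀ i, -B t ≤ x i t} ∩ Icc a b = Icc a b ∩ (fun t i ↦ x i t + B t) ⁻¹' Ici 0 := by
      ext t
      simp only [mem_inter_iff, mem_preimage, mem_Ici, Pi.le_def, Pi.zero_apply, mem_ofPred_eq,
        neg_le_iff_add_nonneg]
      exact and_comm
    rw [this]
    exact (continuousOn_pi.2 fun i ↦ (hx i).add fun t _ ↦ (hB t).continuousAt.continuousWithinAt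
      ).preimage_isClosed_of_isClosed isClosed_Icc isClosed_Ici
  refine hclosed.Icc_subset_of_forall_mem_nhdsWithin (s := {t | ∀ i, -B t ≤ x i t}) ?_ ?_ ht i
  · exact fun i ↦ (neg_neg_of_pos (hB_pos a)).le.trans (ha i)
  · rintro t ⟨hxt, ht⟩
    refine eventually_all.2 fun i ↦ ?_
    have hg : HasDerivWithinAt (fun z ↦ x i z + B z) (x' i t + (L + 1) * B t) (Ici t) t :=
      (hx' i t ht).add (hB t).hasDerivWithinAt
    rcases (neg_le_iff_add_nonneg.1 (hxt i)).lt_or_eq with hpos | hzero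
    · filter_upwards [(hg.continuousWithinAt.mono Ioi_subset_Ici_self).eventually
        (lt_mem_nhds hpos)] with z hz
      linarith
    · have hd : 0 < x' i t + (L + 1) * B t := by
        have := hqp t ht (B t) (hB_pos t) hxt i (by linarith)
        linarith [hB_pos t]
      filter_upwards [hg.eventually_gt_of_deriv_pos hd] with z hz
      linarith

theorem nonneg_of_quasiPositive (hx : ∀ i, ContinuousOn (x i) (Icc a b))
    (hx' : ∀ i, ∀ t ∈ Ico a b, HasDerivWithinAt (x i) (x' i t) (Ici t) t)
    (ha : ∀ i, 0 ≤ x i a)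
    (hqp : ∀ t ∈ Ico a b, ∀ δ > 0, (∀ j, -δ ≤ x j t) → ∀ i, x i t = -δ → -(L * δ) ≤ x' i t)
    {t : ℝ} (ht : t ∈ Icc a b) (i : ι) : 0 ≤ x i t := by
  have hexp : 0 < Real.exp ((L + 1) * t) := Real.exp_pos _
  refine le_of_forall_pos_le_add fun ε hε ↦ ?_
  have := neg_mul_exp_le_of_quasiPositive hx hx' ha hqp (div_pos hε hexp) ht i
  rw [div_mul_cancel₀ ε hexp.ne'] at this
  linarith

end QuasiPositive

theorem neg_mul_le_mul_of_mem_Icc {x y δ M : ℝ} (hx : x ∈ Icc (-δ) M) (hy : y ∈ Icc (-δ) M)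
    (hδ : 0 ≤ δ) (hM : 0 ≤ M) : -(M * δ) ≤ x * y := by
  rcases le_total 0 x with h | h
  · nlinarith [hx.2, hy.1]
  · nlinarith [hx.1, hy.2]

section SEIRRates

variable {p q α g M L δ s e i : ℝ}

theorem seir_rate_S_ge (hp : 0 ≤ p) (hq : 0 ≤ q) (hδ : 0 ≤ δ) (hs : s = -δ) (he : |e| ≤ M)
    (hi : |i| ≤ M) (hL : (p + q) * M ≤ L) : -(L * δ) ≤ -(p * i * s) - q * e * s := by
  subst hs
  have := abs_le.1 he; have := abs_le.1 hi
  nlinarith [mul_nonneg hp hδ, mul_nonneg hq hδ]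

theorem seir_rate_E_ge (hp : 0 ≤ p) (hq : 0 ≤ q) (hα : 0 ≤ α) (hδ : 0 ≤ δ) (hM : 0 ≤ M)
    (he : e = -δ) (hs : s ∈ Icc (-δ) M) (hi : i ∈ Icc (-δ) M) (hL : (p + q) * M + α ≤ L) :
    -(L * δ) ≤ p * i * s + q * e * s - α * e := by
  subst he
  have his := mul_le_mul_of_nonneg_left (neg_mul_le_mul_of_mem_Icc hi hs hδ hM) hp
  nlinarith [mul_nonneg hq hδ, mul_nonneg hα hδ, hs.2]

theorem seir_rate_I_ge (hα : 0 ≤ α) (hg : 0 ≤ g) (hδ : 0 ≤ δ) (hi : i = -δ) (he : -δ ≤ e)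
    (hL : α ≤ L) : -(L * δ) ≤ α * e - g * i := by
  subst hi
  nlinarith [mul_nonneg hg hδ, mul_le_mul_of_nonneg_left he hα]

end SEIRRates

theorem seir_sei_nonneg_on_Icc (S E I βi βe a γ μ : ℝ → ℝ)
    (hβi : Continuous βi) (hβe : Continuous βe) (ha : Continuous a)
    (hβi0 : ∀ t, 0 ≤ βi t) (hβe0 : ∀ t, 0 ≤ βe t) (ha0 : ∀ t, 0 ≤ a t)
    (hγ0 : ∀ t, 0 ≤ γ t) (hμ0 : ∀ t, 0 ≤ μ t)
    (hS : ∀ t, 0 ≤ t → HasDerivAt S (-(βi t * I t * S t) - βe t * E t * S t) t)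
    (hE : ∀ t, 0 ≤ t → HasDerivAt E (βi t * I t * S t + βe t * E t * S t - a t * E t) t)
    (hI : ∀ t, 0 ≤ t → HasDerivAt I (a t * E t - (γ t + μ t) * I t) t)
    (hS0 : 0 ≤ S 0) (hE0 : 0 ≤ E 0) (hI0 : 0 ≤ I 0) {T t : ℝ} (ht : t ∈ Icc 0 T) :
    0 ≤ S t ∧ 0 ≤ E t ∧ 0 ≤ I t := by
  set x : Fin 3 → ℝ → ℝ := ![S, E, I]
  set x' : Fin 3 → ℝ → ℝ := ![fun t ↦ -(βi t * I t * S t) - βe t * E t * S t,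
    fun t ↦ βi t * I t * S t + βe t * E t * S t - a t * E t,
    fun t ↦ a t * E t - (γ t + μ t) * I t]
  have hx' : ∀ i, ∀ t, 0 ≤ t → HasDerivAt (x i) (x' i t) t := by
    intro i; fin_cases i
    exacts [hS, hE, hI]
  have hx : ∀ i, ContinuousOn (x i) (Icc 0 T) := fun i t ht ↦
    (hx' i t ht.1).continuousAt.continuousWithinAt
  obtain ⟨M, hM⟩ := isCompact_Icc.exists_bound_of_continuousOn (continuousOn_pi.2 hx)
  obtain ⟨L, hL⟩ := isCompact_Icc.exists_bound_of_continuousOn (s := Icc (0 : ℝ) T)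
    (f := fun t ↦ (βi t + βe t) * M + a t) (by fun_prop)
  have hqp : ∀ t ∈ Ico 0 T, ∀ δ > 0, (∀ j, -δ ≤ x j t) → ∀ i, x i t = -δ → -(L * δ) ≤ x' i t := by
    intro t ht δ hδ hge i hi
    have hbound : ∀ j, |x j t| ≤ M := fun j ↦
      (norm_le_pi_norm (fun j ↦ x j t) j).trans (hM t (Ico_subset_Icc_self ht))
    have hLt := (le_abs_self _).trans (hL t (Ico_subset_Icc_self ht))
    have hM0 : 0 ≤ M := (abs_nonneg _).trans (hbound 0)
    have hSt : S t ∈ Icc (-δ) M := ⟨hge 0, (abs_le.1 (hbound 0)).2⟩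
    have hIt : I t ∈ Icc (-δ) M := ⟨hge 2, (abs_le.1 (hbound 2)).2⟩
    fin_cases i
    · exact seir_rate_S_ge (hβi0 t) (hβe0 t) hδ.le hi (hbound 1) (hbound 2) (by linarith [ha0 t])
    · exact seir_rate_E_ge (hβi0 t) (hβe0 t) (ha0 t) hδ.le hM0 hi hSt hIt hLt
    · exact seir_rate_I_ge (ha0 t) (add_nonneg (hγ0 t) (hμ0 t)) hδ.le hi (hge 1)
        (by linarith [mul_nonneg (add_nonneg (hβi0 t) (hβe0 t)) hM0])
  have hnonneg := fun i ↦ nonneg_of_quasiPositive hx (fun i t ht ↦ (hx' i t ht.1).hasDerivWithinAt)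
    (by intro i; fin_cases i; exacts [hS0, hE0, hI0]) hqp ht i
  exact ⟨hnonneg 0, hnonneg 1, hnonneg 2⟩

theorem seir_nonneg_general
    (S E I R βi βe a γ μ : ℝ → ℝ)
    (hβi : Continuous βi) (hβe : Continuous βe) (ha : Continuous a)
    (hβi0 : ∀ t, 0 ≤ βi t) (hβe0 : ∀ t, 0 ≤ βe t) (ha0 : ∀ t, 0 ≤ a t)
    (hγ0 : ∀ t, 0 ≤ γ t) (hμ0 : ∀ t, 0 ≤ μ t)
    (hS : ∀ t, 0 ≤ t → HasDerivAt S (-(βi t * I t * S t) - βe t * E t * S t) t)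
    (hE : ∀ t, 0 ≤ t → HasDerivAt E (βi t * I t * S t + βe t * E t * S t - a t * E t) t)
    (hI : ∀ t, 0 ≤ t → HasDerivAt I (a t * E t - (γ t + μ t) * I t) t)
    (hR : ∀ t, 0 ≤ t → HasDerivAt R (γ t * I t) t)
    (hS0 : 0 ≤ S 0) (hE0 : 0 ≤ E 0) (hI0 : 0 ≤ I 0) (hR0 : 0 ≤ R 0) :
    ∀ t, 0 ≤ t → 0 ≤ S t ∧ 0 ≤ E t ∧ 0 ≤ I t ∧ 0 ≤ R t := by
  intro t ht
  have hSEI : ∀ s ∈ Icc 0 t, 0 ≤ S s ∧ 0 ≤ E s ∧ 0 ≤ I s := fun s hs ↦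
    seir_sei_nonneg_on_Icc S E I βi βe a γ μ hβi hβe ha hβi0 hβe0 ha0 hγ0 hμ0 hS hE hI
      hS0 hE0 hI0 hs
  have hR_mono : MonotoneOn R (Icc 0 t) :=
    monotoneOn_of_hasDerivWithinAt_nonneg (convex_Icc 0 t)
      (fun s hs ↦ (hR s hs.1).continuousAt.continuousWithinAt)
      (fun s hs ↦ (hR s (interior_subset hs).1).hasDerivWithinAt)
      (fun s hs ↦ mul_nonneg (hγ0 s) (hSEI s (interior_subset hs)).2.2)
  obtain ⟨hSt, hEt, hIt⟩ := hSEI t ⟨ht, le_rfl⟩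
  exact ⟨hSt, hEt, hIt, hR0.trans (hR_mono ⟨le_rfl, ht⟩ ⟨ht, le_rfl⟩ ht)⟩

/-- Nonnegativity of solutions of the modified SEIR system. -/
theorem seir_nonneg
    (S E I R βi βe a γ μ : ℝ → ℝ)
    (hβi : Continuous βi) (hβe : Continuous βe) (ha : Continuous a)
    (hγ : Continuous γ) (hμ : Continuous μ)
    (hβi0 : ∀ t, 0 ≤ βi t) (hβe0 : ∀ t, 0 ≤ βe t) (ha0 : ∀ t, 0 ≤ a t)
    (hγ0 : ∀ t, 0 ≤ γ t) (hμ0 : ∀ t, 0 ≤ μ t)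
    (hS : ∀ t, 0 ≤ t → HasDerivAt S (-(βi t * I t * S t) - βe t * E t * S t) t)
    (hE : ∀ t, 0 ≤ t → HasDerivAt E (βi t * I t * S t + βe t * E t * S t - a t * E t) t)
    (hI : ∀ t, 0 ≤ t → HasDerivAt I (a t * E t - (γ t + μ t) * I t) t)
    (hR : ∀ t, 0 ≤ t → HasDerivAt R (γ t * I t) t)
    (hS0 : 0 ≤ S 0) (hE0 : 0 ≤ E 0) (hI0 : 0 ≤ I 0) (hR0 : 0 ≤ R 0) :
    ∀ t, 0 ≤ t → 0 ≤ S t ∧ 0 ≤ E t ∧ 0 ≤ I t ∧ 0 ≤ R t :=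
  seir_nonneg_general S E I R βi βe a γ μ hβi hβe ha hβi0 hβe0 ha0 hγ0 hμ0 hS hE hI hR hS0 hE0 hI0
    hR0
end

section
/- Suppose (S,E,I,R) is a nonnegative solution of the modified SEIR system such that S(t) → S_c > 0 as t → ∞, where the parameters βᵢ, βₑ are continuous functions bounded below by a positive constant. Then ∫₀^∞ (βᵢ(s)I(s) + βₑ(s)E(s)) ds < ∞. In particular, liminf_{t→∞} I(t) = 0 and liminf_{t→∞} E(t) = 0. -/
/-!
Since `S' = -(βᵢI + βₑE) S ≤ 0`, `S` decreases to `S_c`, so `S ≥ S_c > 0` and `-log S` is a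
primitive of the force of infection `βᵢI + βₑE ≥ 0`; its finite limit `-log S_c` bounds the
integral. The force of infection dominates `β₀ I` and `β₀ E`, and a nonnegative integrable
function cannot stay above a positive level near infinity.
-/

open Filter MeasureTheory Set Topology

theorem frequently_le_of_integrableOn_Ioi {f : ℝ → ℝ} {a ε : ℝ}
    (hf : IntegrableOn f (Ioi a)) (hε : 0 < ε) : ∃ᶠ t in atTop, f t ≤ ε := by
  by_contra h
  obtain ⟨T, hT⟩ := eventually_atTop.1 (not_frequently.1 h)
  have hconst : IntegrableOn (fun _ ↦ ε) (Ioi (max a T)) := by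
    refine (hf.mono_set (Ioi_subset_Ioi (le_max_left a T))).mono'
      aestronglyMeasurable_const ((ae_restrict_iff' measurableSet_Ioi).2 (.of_forall ?_))
    intro t ht
    rw [Real.norm_of_nonneg hε.le]
    exact (not_le.1 (hT t (le_max_right a T |>.trans ht.out.le))).le
  simp [integrableOn_const_iff, hε.ne'] at hconst

theorem liminf_eq_zero_of_integrableOn_Ioi {f : ℝ → ℝ} {a : ℝ}
    (hf₀ : ∀ᶠ t in atTop, 0 ≤ f t) (hf : IntegrableOn f (Ioi a)) : liminf f atTop = 0 := by
  refine le_antisymm (le_of_forall_pos_le_add fun ε hε ↦ ?_) (le_liminf_of_le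
    (IsCoboundedUnder.of_frequently_le (frequently_le_of_integrableOn_Ioi hf one_pos)) hf₀)
  simpa using liminf_le_of_frequently_le (frequently_le_of_integrableOn_Ioi hf hε)
    (isBoundedUnder_of_eventually_ge hf₀)

theorem MeasureTheory.IntegrableOn.of_const_mul_le {f g : ℝ → ℝ} {s : Set ℝ} {c : ℝ}
    (hs : MeasurableSet s) (hc : 0 < c) (hg : AEStronglyMeasurable g (volume.restrict s))
    (hg₀ : ∀ t ∈ s, 0 ≤ g t) (hle : ∀ t ∈ s, c * g t ≤ f t)
    (hf : IntegrableOn f s) : IntegrableOn g s := by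
  refine (hf.const_mul c⁻¹).mono' hg ((ae_restrict_iff' hs).2 (.of_forall fun t ht ↦ ?_))
  rw [Real.norm_of_nonneg (hg₀ t ht), le_inv_mul_iff₀ hc]
  exact hle t ht

theorem antitoneOn_of_hasDerivAt_neg_mul_self {g S : ℝ → ℝ} {a : ℝ}
    (hg : ∀ t, a ≤ t → 0 ≤ g t) (hS₀ : ∀ t, a ≤ t → 0 ≤ S t)
    (hS : ∀ t, a ≤ t → HasDerivAt S (-g t * S t) t) : AntitoneOn S (Ici a) := by
  refine antitoneOn_of_hasDerivWithinAt_nonpos (convex_Ici a)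
    (fun t ht ↦ (hS t ht).continuousAt.continuousWithinAt)
    (fun t ht ↦ (hS t (interior_subset ht)).hasDerivWithinAt) fun t ht ↦ ?_
  have ht : a ≤ t := interior_subset ht
  nlinarith [mul_nonneg (hg t ht) (hS₀ t ht)]

theorem integrableOn_Ioi_of_hasDerivAt_neg_mul_self {g S : ℝ → ℝ} {a c : ℝ}
    (hg : ∀ t, a ≤ t → 0 ≤ g t) (hS₀ : ∀ t, a ≤ t → 0 ≤ S t)
    (hS : ∀ t, a ≤ t → HasDerivAt S (-g t * S t) t)
    (hlim : Tendsto S atTop (𝓝 c)) (hc : 0 < c) : IntegrableOn g (Ioi a) := by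
  have hanti := antitoneOn_of_hasDerivAt_neg_mul_self hg hS₀ hS
  have hpos : ∀ t, a ≤ t → 0 < S t := fun t ht ↦ hc.trans_le <| le_of_tendsto hlim <|
    eventually_atTop.2 ⟨t, fun u hu ↦ hanti ht (ht.trans hu) hu⟩
  refine integrableOn_Ioi_deriv_of_nonneg' (g := fun t ↦ -Real.log (S t)) (l := -Real.log c)
    (fun t ht ↦ ?_) (fun t ht ↦ hg t (le_of_lt ht)) ?_
  · have h := ((hS t ht).log (hpos t ht).ne').neg
    rwa [neg_mul, neg_div, neg_neg, mul_div_cancel_right₀ _ (hpos t ht).ne'] at h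
  · exact ((Real.continuousAt_log hc.ne').tendsto.comp hlim).neg

theorem seir_positive_limit_integrable_general
    (S E I βi βe : ℝ → ℝ) (Sc β₀ : ℝ)
    (hβ₀ : 0 < β₀) (hβil : ∀ t, β₀ ≤ βi t) (hβel : ∀ t, β₀ ≤ βe t)
    (hSn : ∀ t, 0 ≤ t → 0 ≤ S t) (hEn : ∀ t, 0 ≤ t → 0 ≤ E t)
    (hIn : ∀ t, 0 ≤ t → 0 ≤ I t)
    (hE : Continuous E) (hI : Continuous I)
    (hS : ∀ t, 0 ≤ t → HasDerivAt S (-(βi t * I t + βe t * E t) * S t) t)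
    (hlim : Tendsto S atTop (nhds Sc)) (hSc : 0 < Sc) :
    MeasureTheory.IntegrableOn (fun s => βi s * I s + βe s * E s) (Set.Ici (0:ℝ)) ∧
      liminf I atTop = 0 ∧ liminf E atTop = 0 := by
  have hβiI : ∀ t, 0 ≤ t → 0 ≤ βi t * I t := fun t ht ↦
    mul_nonneg (hβ₀.le.trans (hβil t)) (hIn t ht)
  have hβeE : ∀ t, 0 ≤ t → 0 ≤ βe t * E t := fun t ht ↦
    mul_nonneg (hβ₀.le.trans (hβel t)) (hEn t ht)
  have hforce : IntegrableOn (fun s ↦ βi s * I s + βe s * E s) (Ioi 0) :=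
    integrableOn_Ioi_of_hasDerivAt_neg_mul_self (fun t ht ↦ add_nonneg (hβiI t ht) (hβeE t ht))
      hSn hS hlim hSc
  have hIint : IntegrableOn I (Ioi 0) :=
    hforce.of_const_mul_le measurableSet_Ioi hβ₀ hI.aestronglyMeasurable
      (fun t ht ↦ hIn t ht.out.le) fun t ht ↦
        (mul_le_mul_of_nonneg_right (hβil t) (hIn t ht.out.le)).trans
          (le_add_of_nonneg_right (hβeE t ht.out.le))
  have hEint : IntegrableOn E (Ioi 0) :=
    hforce.of_const_mul_le measurableSet_Ioi hβ₀ hE.aestronglyMeasurable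
      (fun t ht ↦ hEn t ht.out.le) fun t ht ↦
        (mul_le_mul_of_nonneg_right (hβel t) (hEn t ht.out.le)).trans
          (le_add_of_nonneg_left (hβiI t ht.out.le))
  exact ⟨(integrableOn_Ici_iff_integrableOn_Ioi).2 hforce,
    liminf_eq_zero_of_integrableOn_Ioi (eventually_atTop.2 ⟨0, hIn⟩) hIint,
    liminf_eq_zero_of_integrableOn_Ioi (eventually_atTop.2 ⟨0, hEn⟩) hEint⟩

/-- If `S` converges to a positive limit, the total infection pressure is integrable,
and both `I` and `E` have vanishing liminf. -/
theorem seir_positive_limit_integrable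
    (S E I βi βe : ℝ → ℝ) (Sc β₀ : ℝ)
    (hβi : Continuous βi) (hβe : Continuous βe)
    (hβ₀ : 0 < β₀) (hβil : ∀ t, β₀ ≤ βi t) (hβel : ∀ t, β₀ ≤ βe t)
    (hSn : ∀ t, 0 ≤ t → 0 ≤ S t) (hEn : ∀ t, 0 ≤ t → 0 ≤ E t)
    (hIn : ∀ t, 0 ≤ t → 0 ≤ I t)
    (hE : Continuous E) (hI : Continuous I)
    (hS : ∀ t, 0 ≤ t → HasDerivAt S (-(βi t * I t + βe t * E t) * S t) t)
    (hlim : Tendsto S atTop (nhds Sc)) (hSc : 0 < Sc) :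
    MeasureTheory.IntegrableOn (fun s => βi s * I s + βe s * E s) (Set.Ici (0:ℝ)) ∧
      liminf I atTop = 0 ∧ liminf E atTop = 0 :=
  seir_positive_limit_integrable_general S E I βi βe Sc β₀ hβ₀ hβil hβel hSn hEn hIn hE hI hS hlim
    hSc
end

section
/- Let (S,E,I,R) be a nonnegative solution of the modified SEIR system with a, γ, μ positive constants and βᵢ, βₑ positive continuous functions, and suppose E and I are not both identically zero. If at a time t₀ we have I'(t₀) = 0 and S(t₀) < a(γ+μ)/(aβᵢ(t₀) + (γ+μ)βₑ(t₀)), then I''(t₀) < 0; i.e. every critical point of I occurring where S is below this threshold is a strict local maximum. -/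
/-!
At a critical point of `I` we have `I'' = a E' - (γ + μ) I' = a E'`, so it suffices that `E' < 0`.
Criticality gives `a E = (γ + μ) I`, and substituting this turns `(γ + μ) E'` into
`E (S (a βᵢ + (γ + μ) βₑ) - a (γ + μ))`, which is negative exactly below the threshold.
-/

theorem hasDerivAt_deriv_of_forall_hasDerivAt_linear {x y : ℝ → ℝ} {y' a c t₀ : ℝ}
    (hx : ∀ t, HasDerivAt x (a * y t - c * x t) t) (hy : HasDerivAt y y' t₀) :
    HasDerivAt (deriv x) (a * y' - c * deriv x t₀) t₀ := by
  have hderiv : deriv x = fun t => a * y t - c * x t := funext fun t => (hx t).deriv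
  rw [hderiv]
  exact (hy.const_mul a).sub ((hx t₀).const_mul c)

theorem seir_exposed_flux_neg {a c bi be s e i : ℝ} (ha : 0 < a) (hc : 0 < c)
    (hbi : 0 < bi) (hbe : 0 < be) (he : 0 < e) (hcrit : a * e = c * i)
    (hs : s < a * c / (a * bi + c * be)) :
    bi * i * s + be * e * s - a * e < 0 := by
  have hden : 0 < a * bi + c * be := by positivity
  have hs' : s * (a * bi + c * be) < a * c := (lt_div_iff₀ hden).mp hs
  have hfactor : c * (bi * i * s + be * e * s - a * e) = e * (s * (a * bi + c * be) - a * c) := by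
    linear_combination (-(bi * s)) * hcrit
  have hneg : c * (bi * i * s + be * e * s - a * e) < 0 := by
    rw [hfactor]
    exact mul_neg_of_pos_of_neg he (by linarith)
  exact neg_of_mul_neg_right hneg hc.le

theorem seir_critical_point_is_max_general
    (S E I βi βe : ℝ → ℝ) (a γ μ : ℝ) (t₀ : ℝ)
    (ha : 0 < a) (hγ : 0 < γ) (hμ : 0 < μ)
    (hβip : ∀ t, 0 < βi t) (hβep : ∀ t, 0 < βe t)
    (hE : ∀ t, HasDerivAt E (βi t * I t * S t + βe t * E t * S t - a * E t) t)
    (hI : ∀ t, HasDerivAt I (a * E t - (γ + μ) * I t) t)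
    (hEpos : 0 < E t₀)
    (hcrit : deriv I t₀ = 0)
    (hthresh : S t₀ < a * (γ + μ) / (a * βi t₀ + (γ + μ) * βe t₀)) :
    deriv (deriv I) t₀ < 0 := by
  have hI'' := hasDerivAt_deriv_of_forall_hasDerivAt_linear hI (hE t₀)
  rw [hI''.deriv, hcrit, mul_zero, sub_zero]
  have hbalance : a * E t₀ = (γ + μ) * I t₀ := by
    rw [(hI t₀).deriv] at hcrit
    linarith
  exact mul_neg_of_pos_of_neg ha
    (seir_exposed_flux_neg ha (add_pos hγ hμ) (hβip t₀) (hβep t₀) hEpos hbalance hthresh)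

/-- A critical point of `I` where `S` lies below the threshold is a strict local maximum:
the second derivative of `I` there is negative. -/
theorem seir_critical_point_is_max
    (S E I R βi βe : ℝ → ℝ) (a γ μ : ℝ) (t₀ : ℝ)
    (ha : 0 < a) (hγ : 0 < γ) (hμ : 0 < μ)
    (hβi : Continuous βi) (hβe : Continuous βe)
    (hβip : ∀ t, 0 < βi t) (hβep : ∀ t, 0 < βe t)
    (hSn : ∀ t, 0 ≤ S t) (hEn : ∀ t, 0 ≤ E t) (hIn : ∀ t, 0 ≤ I t)
    (hS : ∀ t, HasDerivAt S (-(βi t * I t * S t) - βe t * E t * S t) t)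
    (hE : ∀ t, HasDerivAt E (βi t * I t * S t + βe t * E t * S t - a * E t) t)
    (hI : ∀ t, HasDerivAt I (a * E t - (γ + μ) * I t) t)
    (hR : ∀ t, HasDerivAt R (γ * I t) t)
    (hEpos : 0 < E t₀)
    (hcrit : deriv I t₀ = 0)
    (hthresh : S t₀ < a * (γ + μ) / (a * βi t₀ + (γ + μ) * βe t₀)) :
    deriv (deriv I) t₀ < 0 :=
  seir_critical_point_is_max_general S E I βi βe a γ μ t₀ ha hγ hμ hβip hβep hE hI hEpos hcrit
    hthresh
end

section
/- Let (S,E,A,I,R) be a nonnegative solution of the SEIAR system with positive constants aₐ, aᵢ, γₐ, γᵢ, μ satisfying γₐ ≥ γᵢ + μ, and suppose aᵢA(0) ≤ aₐI(0). Then aᵢA(t) ≤ aₐI(t) for all t ≥ 0; i.e. A(t) ≤ (aₐ/aᵢ)I(t). -/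
open Real Set

/-- With the integrating factor `exp (c t)`, the hypothesis makes `f t * exp (c t)` nondecreasing. -/
theorem nonneg_of_hasDerivAt_add_mul_nonneg {f f' : ℝ → ℝ} {a c : ℝ}
    (hf : ∀ t, a ≤ t → HasDerivAt f (f' t) t) (hf' : ∀ t, a ≤ t → 0 ≤ f' t + c * f t)
    (ha : 0 ≤ f a) : ∀ t, a ≤ t → 0 ≤ f t := by
  set g : ℝ → ℝ := fun t => f t * exp (c * t)
  have hg : ∀ t, a ≤ t → HasDerivAt g ((f' t + c * f t) * exp (c * t)) t := by
    intro t ht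
    have hexp : HasDerivAt (fun t => exp (c * t)) (exp (c * t) * c) t := by
      simpa using ((hasDerivAt_id t).const_mul c).exp
    exact ((hf t ht).mul hexp).congr_deriv (by ring)
  have hmono : MonotoneOn g (Ici a) :=
    monotoneOn_of_hasDerivWithinAt_nonneg (convex_Ici a)
      (fun t ht => (hg t ht).continuousAt.continuousWithinAt)
      (fun t ht => (hg t (interior_subset ht)).hasDerivWithinAt)
      (fun t ht => mul_nonneg (hf' t (interior_subset ht)) (exp_pos _).le)
  intro t ht
  have hgt : 0 ≤ g t := (mul_nonneg ha (exp_pos _).le).trans (hmono self_mem_Ici ht ht)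
  exact nonneg_of_mul_nonneg_left hgt (exp_pos _)

theorem seiar_comparison_A_I_general
    (E A I : ℝ → ℝ) (ai aa γi γa μ : ℝ)
    (haa : 0 < aa)
    (hγ : γi + μ ≤ γa)
    (hIn : ∀ t, 0 ≤ t → 0 ≤ I t)
    (hA : ∀ t, 0 ≤ t → HasDerivAt A (aa * E t - γa * A t) t)
    (hI : ∀ t, 0 ≤ t → HasDerivAt I (ai * E t - (γi + μ) * I t) t)
    (h0 : ai * A 0 ≤ aa * I 0) :
    ∀ t, 0 ≤ t → ai * A t ≤ aa * I t := by
  -- the gap `w = aa I - ai A` satisfies `w' + γa w = aa (γa - (γi + μ)) I ≥ 0`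
  have hgap : ∀ t, 0 ≤ t → 0 ≤ aa * I t - ai * A t :=
    nonneg_of_hasDerivAt_add_mul_nonneg (c := γa)
      (fun t ht => ((hI t ht).const_mul aa).sub ((hA t ht).const_mul ai))
      (fun t ht => by
        have hsource : 0 ≤ aa * (γa - (γi + μ)) * I t :=
          mul_nonneg (mul_nonneg haa.le (sub_nonneg.2 hγ)) (hIn t ht)
        linarith)
      (sub_nonneg.2 h0)
  intro t ht
  linarith [hgap t ht]

/-- Comparison lemma: if `γₐ ≥ γᵢ + μ` and `aᵢA(0) ≤ aₐI(0)`, then `aᵢA(t) ≤ aₐI(t)`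
for all `t ≥ 0`. -/
theorem seiar_comparison_A_I
    (E A I : ℝ → ℝ) (ai aa γi γa μ : ℝ)
    (hai : 0 < ai) (haa : 0 < aa) (hγi : 0 < γi) (hγa : 0 < γa) (hμ : 0 < μ)
    (hγ : γi + μ ≤ γa)
    (hEn : ∀ t, 0 ≤ t → 0 ≤ E t) (hIn : ∀ t, 0 ≤ t → 0 ≤ I t)
    (hA : ∀ t, 0 ≤ t → HasDerivAt A (aa * E t - γa * A t) t)
    (hI : ∀ t, 0 ≤ t → HasDerivAt I (ai * E t - (γi + μ) * I t) t)
    (h0 : ai * A 0 ≤ aa * I 0) :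
    ∀ t, 0 ≤ t → ai * A t ≤ aa * I t :=
  seiar_comparison_A_I_general E A I ai aa γi γa μ haa hγ hIn hA hI h0
end
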